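/- Let X, Z_N, Z_R be random variables taking values in finite measurable spaces on a probability space (Ω, μ), and let Z' and Z'' be two further finite-valued random variables (the measurement variables corresponding to two admissible actions of agent i). Assume I[Z' : Z_R | Z_N] = 0, I[Z' : Z_R | ⟨X, Z_N⟩] = 0, I[Z'' : Z_R | Z_N] = 0, and I[Z'' : Z_R | ⟨X, Z_N⟩] = 0. Then the difference of the localized utilities equals the difference of the global potential: I[X : Z' | Z_N] − I[X : Z'' | Z_N] = I[X : ⟨Z', Z_N, Z_R⟩] − I[X : ⟨Z'', Z_N, Z_R⟩]. -/

import Mathlib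

open MeasureTheory ProbabilityTheory

/-- Shannon entropy of a random variable with values in a finite measurable space. -/
noncomputable def entropy {Ω S : Type*} [MeasurableSpace Ω] [Fintype S] [MeasurableSpace S]
    (X : Ω → S) (μ : Measure Ω) : ℝ :=
  ∑ x : S, Real.negMulLog ((μ.map X) {x}).toReal

/-- Conditional entropy H[X | Y]. -/
noncomputable def condEntropy {Ω S T : Type*} [MeasurableSpace Ω] [Fintype S] [MeasurableSpace S]
    [Fintype T] [MeasurableSpace T] (X : Ω → S) (Y : Ω → T) (μ : Measure Ω) : ℝ :=
  ∑ y : T, ((μ.map Y) {y}).toReal * entropy X (ProbabilityTheory.cond μ (Y ⁻¹' {y}))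

/-- Mutual information I[X : Y]. -/
noncomputable def mutualInfo {Ω S T : Type*} [MeasurableSpace Ω] [Fintype S] [MeasurableSpace S]
    [Fintype T] [MeasurableSpace T] (X : Ω → S) (Y : Ω → T) (μ : Measure Ω) : ℝ :=
  entropy X μ + entropy Y μ - entropy (fun ω => (X ω, Y ω)) μ

/-- Conditional mutual information I[X : Y | Z]. -/
noncomputable def condMutualInfo {Ω S T U : Type*} [MeasurableSpace Ω] [Fintype S]
    [MeasurableSpace S] [Fintype T] [MeasurableSpace T] [Fintype U] [MeasurableSpace U]
    (X : Ω → S) (Y : Ω → T) (Z : Ω → U) (μ : Measure Ω) : ℝ :=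
  ∑ z : U, ((μ.map Z) {z}).toReal * mutualInfo X Y (ProbabilityTheory.cond μ (Z ⁻¹' {z}))

/-! Conditional independence of `Z` and `R`, both given `N` and given `(X, N)`, makes the
localized utility `I[X : Z | N]` equal to the marginal gain `I[X : (Z, N, R)] - I[X : (N, R)]`
of the global potential, and `I[X : (N, R)]` does not depend on the action. Via the chain rule
`H[X | Y] = H[X, Y] - H[Y]`, all quantities become joint entropies, and the claim is a linear
identity among them once tuples that differ only by a reordering are identified. -/

open Function Real

lemma Real.sum_mul_sum_negMulLog_div_sum {ι : Type*} (s : Finset ι) {r : ι → ℝ}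
    (hr : ∀ i ∈ s, 0 ≤ r i) :
    (∑ i ∈ s, r i) * ∑ i ∈ s, negMulLog (r i / ∑ j ∈ s, r j)
      = ∑ i ∈ s, negMulLog (r i) - negMulLog (∑ i ∈ s, r i) := by
  set P := ∑ i ∈ s, r i
  rcases eq_or_ne P 0 with hP | hP
  · have hr0 : ∀ i ∈ s, r i = 0 := (Finset.sum_eq_zero_iff_of_nonneg hr).1 hP
    have hsum : ∑ i ∈ s, negMulLog (r i) = 0 :=
      Finset.sum_eq_zero fun i hi => by rw [hr0 i hi, negMulLog_zero]
    simp [hP, hsum]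
  · have hsplit : ∀ i, negMulLog (r i) = r i / P * negMulLog P + P * negMulLog (r i / P) := by
      intro i
      rw [← negMulLog_mul, mul_div_cancel₀ _ hP]
    rw [Finset.sum_congr rfl fun i _ => hsplit i, Finset.sum_add_distrib, ← Finset.sum_mul,
      ← Finset.sum_div, div_self hP, ← Finset.mul_sum]
    ring

section Entropy

variable {Ω α β : Type*} [MeasurableSpace Ω] {μ : Measure Ω}
  [Fintype α] [MeasurableSpace α] [MeasurableSingletonClass α]
  [Fintype β] [MeasurableSpace β] [MeasurableSingletonClass β]

lemma entropy_comp_of_injective {W : Ω → α} (hW : Measurable W) {f : α → β}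
    (hf : Injective f) : entropy (f ∘ W) μ = entropy W μ := by
  classical
  have hf_meas : Measurable f := measurable_of_countable f
  have hf_preimage : ∀ a, f ⁻¹' {f a} = {a} := fun a => by ext; simp [hf.eq_iff]
  have hoff_range : ∀ b ∉ Finset.univ.image f, (μ.map (f ∘ W)) {b} = 0 := by
    intro b hb
    have hempty : f ⁻¹' {b} = ∅ :=
      Set.eq_empty_iff_forall_notMem.2 fun a ha => hb (by simpa using ⟨a, ha⟩)
    rw [Measure.map_apply (hf_meas.comp hW) (measurableSet_singleton b), Set.preimage_comp,
      hempty, Set.preimage_empty, measure_empty]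
  unfold entropy
  rw [← Finset.sum_subset (Finset.subset_univ _) fun b _ hb => by simp [hoff_range b hb],
    Finset.sum_image fun a _ b _ h => hf h]
  refine Finset.sum_congr rfl fun a _ => ?_
  rw [Measure.map_apply (hf_meas.comp hW) (measurableSet_singleton _), Set.preimage_comp,
    hf_preimage, Measure.map_apply hW (measurableSet_singleton _)]

end Entropy

section ChainRule

variable {Ω α β : Type*} [MeasurableSpace Ω] {μ : Measure Ω} [IsFiniteMeasure μ]
  [Fintype α] [MeasurableSpace α] [MeasurableSingletonClass α]
  [Fintype β] [MeasurableSpace β] [MeasurableSingletonClass β]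

lemma condEntropy_eq_entropy_prod_sub {X : Ω → α} {Y : Ω → β} (hX : Measurable X)
    (hY : Measurable Y) :
    condEntropy X Y μ = entropy (fun ω => (X ω, Y ω)) μ - entropy Y μ := by
  set p : α → β → ℝ := fun x y => ((μ.map fun ω => (X ω, Y ω)) {(x, y)}).toReal
  set q : β → ℝ := fun y => ((μ.map Y) {y}).toReal
  have hmarg : ∀ y, ∑ x, p x y = q y := by
    intro y
    have hfiber :
        (fun ω => (X ω, Y ω)) ⁻¹' ↑(Finset.univ ×ˢ {y} : Finset (α × β)) = Y ⁻¹' {y} := by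
      ext; simp [eq_comm]
    dsimp only [p, q]
    rw [← ENNReal.toReal_sum fun _ _ => measure_ne_top _ _,
      Measure.map_apply hY (measurableSet_singleton y), ← hfiber,
      ← Measure.map_apply (hX.prodMk hY) (Finset.measurableSet _), ← sum_measure_singleton,
      Finset.sum_product, Finset.sum_congr rfl fun _ _ => Finset.sum_singleton _ _]
  have hcond : ∀ x y, ((cond μ (Y ⁻¹' {y})).map X {x}).toReal = p x y / q y := by
    intro x y
    have hfiber : (fun ω => (X ω, Y ω)) ⁻¹' {(x, y)} = Y ⁻¹' {y} ∩ X ⁻¹' {x} := by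
      ext; simp [and_comm]
    rw [Measure.map_apply hX (measurableSet_singleton x),
      cond_apply (hY (measurableSet_singleton y)), ENNReal.toReal_mul, ENNReal.toReal_inv,
      div_eq_inv_mul, ← hfiber,
      ← Measure.map_apply (hX.prodMk hY) (measurableSet_singleton _),
      ← Measure.map_apply hY (measurableSet_singleton _)]
  have hfiberwise : ∀ y, q y * entropy X (cond μ (Y ⁻¹' {y}))
      = ∑ x, negMulLog (p x y) - negMulLog (q y) := by
    intro y
    simp only [entropy, hcond, ← hmarg]
    exact Real.sum_mul_sum_negMulLog_div_sum _ fun _ _ => ENNReal.toReal_nonneg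
  unfold condEntropy
  rw [Finset.sum_congr rfl fun y _ => hfiberwise y, Finset.sum_sub_distrib, Finset.sum_comm]
  simp only [entropy, Fintype.sum_prod_type, p, q]

end ChainRule

section MutualInfo

variable {Ω α β γ δ : Type*} [MeasurableSpace Ω] {μ : Measure Ω}
  [Fintype α] [MeasurableSpace α] [MeasurableSingletonClass α]
  [Fintype β] [MeasurableSpace β] [MeasurableSingletonClass β]
  [Fintype γ] [MeasurableSpace γ] [MeasurableSingletonClass γ]
  [Fintype δ] [MeasurableSpace δ] [MeasurableSingletonClass δ]

omit [MeasurableSingletonClass α] [MeasurableSingletonClass β] [MeasurableSingletonClass γ] in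
lemma condMutualInfo_eq_condEntropy (X : Ω → α) (Y : Ω → β) (Z : Ω → γ) :
    condMutualInfo X Y Z μ
      = condEntropy X Z μ + condEntropy Y Z μ - condEntropy (fun ω => (X ω, Y ω)) Z μ := by
  simp only [condMutualInfo, condEntropy, mutualInfo, ← Finset.sum_add_distrib,
    ← Finset.sum_sub_distrib, mul_sub, mul_add]

lemma condMutualInfo_eq_entropy [IsFiniteMeasure μ] {X : Ω → α} {Y : Ω → β} {Z : Ω → γ}
    (hX : Measurable X) (hY : Measurable Y) (hZ : Measurable Z) :
    condMutualInfo X Y Z μ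
      = entropy (fun ω => (X ω, Z ω)) μ + entropy (fun ω => (Y ω, Z ω)) μ
        - entropy (fun ω => ((X ω, Y ω), Z ω)) μ - entropy Z μ := by
  rw [condMutualInfo_eq_condEntropy, condEntropy_eq_entropy_prod_sub hX hZ,
    condEntropy_eq_entropy_prod_sub hY hZ, condEntropy_eq_entropy_prod_sub (hX.prodMk hY) hZ]
  ring

lemma mutualInfo_eq_add_condMutualInfo_of_condIndep [IsFiniteMeasure μ]
    {X : Ω → α} {Z : Ω → β} {N : Ω → γ} {R : Ω → δ}
    (hX : Measurable X) (hZ : Measurable Z) (hN : Measurable N) (hR : Measurable R)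
    (hZR : condMutualInfo Z R N μ = 0)
    (hZR_X : condMutualInfo Z R (fun ω => (X ω, N ω)) μ = 0) :
    mutualInfo X (fun ω => (Z ω, N ω, R ω)) μ
      = mutualInfo X (fun ω => (N ω, R ω)) μ + condMutualInfo X Z N μ := by
  have e1 :
      entropy (fun ω => ((X ω, Z ω), N ω)) μ = entropy (fun ω => (Z ω, X ω, N ω)) μ :=
    entropy_comp_of_injective (hZ.prodMk (hX.prodMk hN))
      (f := fun p => ((p.2.1, p.1), p.2.2))
      fun a b h => by simp only [Prod.ext_iff] at h ⊢; tauto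
  have e2 : entropy (fun ω => (Z ω, N ω, R ω)) μ = entropy (fun ω => ((Z ω, R ω), N ω)) μ :=
    entropy_comp_of_injective ((hZ.prodMk hR).prodMk hN)
      (f := fun p => (p.1.1, p.2, p.1.2))
      fun a b h => by simp only [Prod.ext_iff] at h ⊢; tauto
  have e3 : entropy (fun ω => (X ω, Z ω, N ω, R ω)) μ
      = entropy (fun ω => ((Z ω, R ω), X ω, N ω)) μ :=
    entropy_comp_of_injective ((hZ.prodMk hR).prodMk (hX.prodMk hN))
      (f := fun p => (p.2.1, p.1.1, p.2.2, p.1.2))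
      fun a b h => by simp only [Prod.ext_iff] at h ⊢; tauto
  have e4 : entropy (fun ω => (X ω, N ω, R ω)) μ = entropy (fun ω => (R ω, X ω, N ω)) μ :=
    entropy_comp_of_injective (hR.prodMk (hX.prodMk hN))
      (f := fun p => (p.2.1, p.2.2, p.1))
      fun a b h => by simp only [Prod.ext_iff] at h ⊢; tauto
  have e5 : entropy (fun ω => (N ω, R ω)) μ = entropy (fun ω => (R ω, N ω)) μ :=
    entropy_comp_of_injective (hR.prodMk hN) Prod.swap_injective
  rw [condMutualInfo_eq_entropy hZ hR hN] at hZR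
  rw [condMutualInfo_eq_entropy hZ hR (hX.prodMk hN)] at hZR_X
  rw [mutualInfo, mutualInfo, condMutualInfo_eq_entropy hX hZ hN]
  linarith

end MutualInfo

/-- Proposition 1: under the conditional-independence assumptions, the localized utility
differences coincide with the global potential differences. -/
theorem localized_utility_is_potential_aligned
    {Ω 𝒳 𝒵N 𝒵R 𝒵' 𝒵'' : Type*} [MeasurableSpace Ω]
    [Fintype 𝒳] [MeasurableSpace 𝒳] [MeasurableSingletonClass 𝒳]
    [Fintype 𝒵N] [MeasurableSpace 𝒵N] [MeasurableSingletonClass 𝒵N]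
    [Fintype 𝒵R] [MeasurableSpace 𝒵R] [MeasurableSingletonClass 𝒵R]
    [Fintype 𝒵'] [MeasurableSpace 𝒵'] [MeasurableSingletonClass 𝒵']
    [Fintype 𝒵''] [MeasurableSpace 𝒵''] [MeasurableSingletonClass 𝒵'']
    (μ : Measure Ω) [IsProbabilityMeasure μ]
    (X : Ω → 𝒳) (ZN : Ω → 𝒵N) (ZR : Ω → 𝒵R) (Z' : Ω → 𝒵') (Z'' : Ω → 𝒵'')
    (hX : Measurable X) (hZN : Measurable ZN) (hZR : Measurable ZR)
    (hZ' : Measurable Z') (hZ'' : Measurable Z'')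
    (h1 : condMutualInfo Z' ZR ZN μ = 0)
    (h2 : condMutualInfo Z' ZR (fun ω => (X ω, ZN ω)) μ = 0)
    (h3 : condMutualInfo Z'' ZR ZN μ = 0)
    (h4 : condMutualInfo Z'' ZR (fun ω => (X ω, ZN ω)) μ = 0) :
    condMutualInfo X Z' ZN μ - condMutualInfo X Z'' ZN μ
      = mutualInfo X (fun ω => (Z' ω, ZN ω, ZR ω)) μ
        - mutualInfo X (fun ω => (Z'' ω, ZN ω, ZR ω)) μ := by
  rw [mutualInfo_eq_add_condMutualInfo_of_condIndep hX hZ' hZN hZR h1 h2,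
    mutualInfo_eq_add_condMutualInfo_of_condIndep hX hZ'' hZN hZR h3 h4]
  ring
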